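/- arXiv:1312.0993 — 2 statements merged into one kernel-verified Lean document; each statement's English description precedes it below -/
import Mathlib

section
/- For all real x, cos(x)·J₀(x) = Σ_{k=0}^∞ (-1)^k (4k)!/((2k)!)³ · (x/2)^{2k}, where J₀ is the Bessel function of the first kind of order 0. -/
/-!
Multiply the power series of `cos` and `J₀` (Cauchy product). The coefficient of
`(-1)^k (x/2)^(2k)` is `∑_{m ≤ k} 4^m / ((2m)! ((k-m)!)²)`, and `(2k)!` times it is
`∑_m 4^m C(2k, k+m) C(k+m, k-m)`, the coefficient of `X^(2k)` in
`(X (X + 2) + 1)^(2k) = (X + 1)^(4k)`, i.e. `C(4k, 2k)`.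
-/

open Finset Polynomial Nat

theorem Nat.choose_mul_choose_mul_factorial {n a b : ℕ} (hba : b ≤ a) (han : a ≤ n) :
    n.choose a * a.choose b * (b ! * (a - b)! * (n - a)!) = n ! := by
  rw [← choose_mul_factorial_mul_factorial han, ← choose_mul_factorial_mul_factorial hba]
  ring

theorem Nat.choose_two_mul_self_eq_sum (n : ℕ) :
    (2 * n).choose n =
      ∑ j ∈ range (n + 1), 2 ^ (2 * j - n) * j.choose (n - j) * n.choose j := by
  have hsquare : (X + 1 : ℕ[X]) ^ (2 * n) = (X * (X + C 2) + 1) ^ n := by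
    rw [pow_mul, C_ofNat]; ring
  have hcoeff := coeff_X_add_one_pow ℕ (2 * n) n
  rw [hsquare, add_pow, finsetSum_coeff, Nat.cast_id] at hcoeff
  rw [← hcoeff]
  refine sum_congr rfl fun j hj => ?_
  obtain ⟨i, rfl⟩ : ∃ i, n = i + j := ⟨n - j, by grind⟩
  rw [one_pow, mul_one, mul_pow, ← C_eq_natCast, coeff_mul_C, coeff_X_pow_mul,
    coeff_X_add_C_pow, Nat.add_sub_cancel]
  grind

theorem Nat.choose_four_mul_two_mul_eq_sum (k : ℕ) :
    (4 * k).choose (2 * k) =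
      ∑ m ∈ range (k + 1), 4 ^ m * (k + m).choose (k - m) * (2 * k).choose (k + m) := by
  rw [show 4 * k = 2 * (2 * k) by ring, choose_two_mul_self_eq_sum,
    show 2 * k + 1 = k + (k + 1) by ring, sum_range_add, sum_eq_zero, zero_add]
  · refine sum_congr rfl fun m hm => ?_
    rw [show 2 * (k + m) - 2 * k = 2 * m by omega, pow_mul, show 2 * k - (k + m) = k - m by omega]
    rfl
  · intro j hj
    rw [choose_eq_zero_of_lt (by grind), mul_zero, zero_mul]

theorem sum_four_pow_div_factorial_mul_factorial_sq (k : ℕ) :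
    ∑ m ∈ range (k + 1), (4 : ℝ) ^ m / ((2 * m)! * ((k - m)! : ℝ) ^ 2) =
      (4 * k)! / ((2 * k)! : ℝ) ^ 3 := by
  have hterm : ∀ m ∈ range (k + 1), (4 : ℝ) ^ m / ((2 * m)! * ((k - m)! : ℝ) ^ 2) =
      (4 ^ m * (k + m).choose (k - m) * (2 * k).choose (k + m) : ℕ) / (2 * k)! := by
    intro m hm
    have hmk : m ≤ k := Nat.lt_succ_iff.mp (mem_range.mp hm)
    have h := choose_mul_choose_mul_factorial (show k - m ≤ k + m by omega)
      (show k + m ≤ 2 * k by omega)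
    rw [show k + m - (k - m) = 2 * m by omega, show 2 * k - (k + m) = k - m by omega] at h
    rw [eq_div_iff (by positivity), ← h]
    push_cast
    field_simp
  rw [sum_congr rfl hterm, ← sum_div, ← Nat.cast_sum, ← choose_four_mul_two_mul_eq_sum,
    Nat.cast_choose ℝ (show 2 * k ≤ 4 * k by omega), show 4 * k - 2 * k = 2 * k by omega]
  field_simp

theorem summable_norm_cos_series (x : ℝ) :
    Summable fun n : ℕ => ‖(-1) ^ n * x ^ (2 * n) / (2 * n)!‖ :=
  summable_abs_iff.mpr (Real.hasSum_cos x).summable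

theorem summable_norm_besselJ0_series (x : ℝ) :
    Summable fun n : ℕ => ‖(-1) ^ n * (x / 2) ^ (2 * n) / (n ! : ℝ) ^ 2‖ := by
  refine (Real.summable_pow_div_factorial ((x / 2) ^ 2)).of_nonneg_of_le (fun n => norm_nonneg _)
    fun n => ?_
  have hnorm :
      ‖(-1) ^ n * (x / 2) ^ (2 * n) / (n ! : ℝ) ^ 2‖ = ((x / 2) ^ 2) ^ n / n ! / n ! := by
    rw [norm_div, norm_mul, norm_pow, norm_pow, norm_neg, norm_one, one_pow, one_mul, pow_mul,
      Real.norm_eq_abs, sq_abs, norm_pow, Real.norm_natCast, div_div, ← sq]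
  rw [hnorm]
  exact div_le_self (by positivity) (one_le_cast.mpr n.factorial_pos)

theorem cos_series_term_mul_besselJ0_series_term (x : ℝ) {k m : ℕ} (hmk : m ≤ k) :
    (-1) ^ m * x ^ (2 * m) / (2 * m)! *
        ((-1) ^ (k - m) * (x / 2) ^ (2 * (k - m)) / ((k - m)! : ℝ) ^ 2) =
      (-1) ^ k * (x / 2) ^ (2 * k) * (4 ^ m / ((2 * m)! * ((k - m)! : ℝ) ^ 2)) := by
  obtain ⟨i, rfl⟩ : ∃ i, k = m + i := ⟨k - m, by omega⟩
  obtain ⟨y, rfl⟩ : ∃ y, x = 2 * y := ⟨x / 2, by ring⟩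
  rw [Nat.add_sub_cancel_left, mul_div_cancel_left₀ y two_ne_zero, mul_pow, pow_mul 2]
  ring

/-- Bessel function of the first kind of order 0, via its Taylor series. -/
noncomputable def besselJ0 (x : ℝ) : ℝ :=
  ∑' n : ℕ, (-1) ^ n * (x / 2) ^ (2 * n) / (Nat.factorial n : ℝ) ^ 2

theorem cos_mul_besselJ0_series (x : ℝ) :
    Real.cos x * besselJ0 x =
      ∑' k : ℕ, (-1) ^ k * (Nat.factorial (4 * k) : ℝ) / (Nat.factorial (2 * k) : ℝ) ^ 3
        * (x / 2) ^ (2 * k) := by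
  rw [Real.cos_eq_tsum, besselJ0, tsum_mul_tsum_eq_tsum_sum_range_of_summable_norm
    (summable_norm_cos_series x) (summable_norm_besselJ0_series x)]
  refine tsum_congr fun k => ?_
  rw [sum_congr rfl fun m hm => cos_series_term_mul_besselJ0_series_term x
      (Nat.lt_succ_iff.mp (mem_range.mp hm)),
    ← mul_sum, sum_four_pow_div_factorial_mul_factorial_sq]
  ring
end

section
/- For all real x, cos(x)·J₀(x) = Σ_{n=0}^∞ ((1/4)_n (3/4)_n) / ((1/2)_n (1/2)_n) · (-x²)^n / (n!)², where (a)_n denotes the Pochhammer symbol. -/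
/-- Pochhammer (rising factorial) symbol for real argument. -/
noncomputable def poch (a : ℝ) (n : ℕ) : ℝ := ∏ i ∈ Finset.range n, (a + i)

/-!
Multiply the Taylor series of `J₀` and `cos` as a Cauchy product. The coefficient of `(-x²)ⁿ` is
`∑ₖ 1 / (4ᵏ k!² (2n-2k)!) = ∑ₖ C(2n,2k) C(2k,k) 4ⁿ⁻ᵏ / (4ⁿ (2n)!)`, and the numerator sum is
`C(4n,2n)`, as one sees by comparing the coefficients of `X²ⁿ` in `(1+X)⁴ⁿ = ((1+X²) + 2X)²ⁿ`.
Gauss's multiplication formula `(mn)! = m^(mn) ∏_{j=1}^{m} (j/m)ₙ`, for `m = 2` and `m = 4`,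
turns `C(4n,2n) / (4ⁿ (2n)!)` into `(1/4)ₙ (3/4)ₙ / ((1/2)ₙ² n!²)`.
-/

open Finset Nat Polynomial

theorem centralBinom_mul_factorial_mul_factorial (k : ℕ) :
    k.centralBinom * k ! * k ! = (2 * k)! := by
  have := choose_mul_factorial_mul_factorial (le_add_right k k)
  rwa [Nat.add_sub_cancel, ← two_mul, ← centralBinom_eq_two_mul_choose] at this

theorem coeff_X_sq_add_one_pow {R : Type*} [CommSemiring R] (N d : ℕ) :
    ((X ^ 2 + 1 : R[X]) ^ N).coeff d = if 2 ∣ d then (N.choose (d / 2) : R) else 0 := by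
  have : (X ^ 2 + 1 : R[X]) ^ N = expand R 2 ((X + 1) ^ N) := by simp
  rw [this, coeff_expand two_pos, coeff_X_add_one_pow]

theorem sum_range_two_mul_add_one_eq_sum_even {M : Type*} [AddCommMonoid M] {g : ℕ → M}
    (hg : ∀ i, ¬ 2 ∣ i → g i = 0) (n : ℕ) :
    ∑ i ∈ range (2 * n + 1), g i = ∑ k ∈ range (n + 1), g (2 * k) := by
  induction n with
  | zero => simp
  | succ n ih =>
    rw [show 2 * (n + 1) + 1 = 2 * n + 1 + 1 + 1 by ring, sum_range_succ, sum_range_succ, ih,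
      sum_range_succ (n := n + 1), hg _ (by omega), add_zero, mul_add_one]

theorem coeff_X_sq_add_one_pow_mul_two_mul_X_pow {n i : ℕ} (hi : i ≤ 2 * n) :
    ((X ^ 2 + 1 : ℕ[X]) ^ i * (2 * X) ^ (2 * n - i)).coeff (2 * n) =
      if 2 ∣ i then i.choose (i / 2) * 2 ^ (2 * n - i) else 0 := by
  rw [mul_pow, mul_left_comm, show (2 : ℕ[X]) ^ (2 * n - i) = C (2 ^ (2 * n - i)) by simp,
    coeff_C_mul, coeff_mul_X_pow', if_pos (Nat.sub_le _ _), Nat.sub_sub_self hi,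
    coeff_X_sq_add_one_pow]
  split_ifs <;> simp [mul_comm]

theorem sum_choose_mul_centralBinom_mul_four_pow (n : ℕ) :
    ∑ k ∈ range (n + 1), (2 * n).choose (2 * k) * k.centralBinom * 4 ^ (n - k) =
      (4 * n).choose (2 * n) := by
  set g : ℕ → ℕ := fun i => (2 * n).choose i *
    ((X ^ 2 + 1 : ℕ[X]) ^ i * (2 * X) ^ (2 * n - i)).coeff (2 * n)
  calc _ = ∑ k ∈ range (n + 1), g (2 * k) := by
        refine sum_congr rfl fun k hk => ?_
        simp only [g]
        rw [coeff_X_sq_add_one_pow_mul_two_mul_X_pow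
            (Nat.mul_le_mul_left 2 (mem_range_succ_iff.mp hk)),
          if_pos (dvd_mul_right _ _), Nat.mul_div_cancel_left _ two_pos,
          Nat.centralBinom_eq_two_mul_choose, ← Nat.mul_sub, pow_mul]
        ring
    _ = ∑ i ∈ range (2 * n + 1), g i := by
        refine (sum_range_two_mul_add_one_eq_sum_even (fun i hi => ?_) n).symm
        rcases le_or_gt i (2 * n) with h | h
        · simp [g, coeff_X_sq_add_one_pow_mul_two_mul_X_pow h, hi]
        · simp [g, Nat.choose_eq_zero_of_lt h]
    _ = (((X ^ 2 + 1) + 2 * X) ^ (2 * n)).coeff (2 * n) := by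
        rw [add_pow, finsetSum_coeff]
        refine sum_congr rfl fun i _ => ?_
        rw [← C_eq_natCast, coeff_mul_C, Nat.cast_id, mul_comm]
    _ = ((X + 1 : ℕ[X]) ^ (4 * n)).coeff (2 * n) := by
        rw [show 4 * n = 2 * (2 * n) by ring, pow_mul (X + 1)]
        ring_nf
    _ = (4 * n).choose (2 * n) := coeff_X_add_one_pow _ _ _

theorem poch_succ (a : ℝ) (n : ℕ) : poch a (n + 1) = poch a n * (a + n) :=
  prod_range_succ _ _

theorem poch_pos {a : ℝ} (ha : 0 < a) (n : ℕ) : 0 < poch a n :=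
  prod_pos fun _ _ => by positivity

theorem poch_one (n : ℕ) : poch 1 n = n ! := by
  rw [poch, ← prod_range_add_one_eq_factorial]
  push_cast
  simp only [add_comm]

theorem pow_mul_prod_poch_eq_factorial (m n : ℕ) :
    (m : ℝ) ^ (m * n) * ∏ j ∈ range m, poch ((j + 1) / m) n = (m * n)! := by
  induction n with
  | zero => simp [poch]
  | succ n ih =>
    have hstep : (m : ℝ) ^ m * ∏ j ∈ range m, ((j + 1) / m + n : ℝ) =
        (m * n + 1).ascFactorial m := by
      rw [show (m : ℝ) ^ m = (m : ℝ) ^ #(range m) by rw [card_range], pow_card_mul_prod,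
        ascFactorial_eq_prod_range, cast_prod]
      refine prod_congr rfl fun j hj => ?_
      have hm : (m : ℝ) ≠ 0 := cast_ne_zero.mpr (ne_zero_of_lt (mem_range.mp hj))
      field_simp
      push_cast
      ring
    rw [Nat.mul_add_one, ← factorial_mul_ascFactorial, pow_add, cast_mul, ← ih, ← hstep]
    simp only [poch_succ, prod_mul_distrib]
    ring

theorem factorial_two_mul_eq_poch (n : ℕ) : ((2 * n)! : ℝ) = 4 ^ n * poch (1 / 2) n * n ! := by
  have := pow_mul_prod_poch_eq_factorial 2 n
  simp only [Finset.prod_range_succ, Finset.prod_range_zero] at this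
  norm_num [poch_one, pow_mul] at this
  linear_combination -this

theorem factorial_four_mul_eq_poch (n : ℕ) :
    ((4 * n)! : ℝ) = 256 ^ n * poch (1 / 4) n * poch (1 / 2) n * poch (3 / 4) n * n ! := by
  have := pow_mul_prod_poch_eq_factorial 4 n
  simp only [Finset.prod_range_succ, Finset.prod_range_zero] at this
  norm_num [poch_one, pow_mul] at this
  linear_combination -this

theorem cast_choose_four_mul_two_mul_div (n : ℕ) :
    ((4 * n).choose (2 * n) : ℝ) / (4 ^ n * (2 * n)!) =
      poch (1 / 4) n * poch (3 / 4) n / (poch (1 / 2) n * poch (1 / 2) n) / (n ! : ℝ) ^ 2 := by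
  have hhalf := poch_pos (a := 1 / 2) (by norm_num) n
  rw [cast_choose ℝ (by omega), show 4 * n - 2 * n = 2 * n by omega, factorial_four_mul_eq_poch,
    factorial_two_mul_eq_poch,
    show (256 : ℝ) ^ n = (4 ^ n) ^ 4 by rw [← pow_mul, mul_comm, pow_mul]; norm_num]
  field_simp

theorem summable_norm_cos_term (x : ℝ) :
    Summable fun k : ℕ => ‖(-1) ^ k * x ^ (2 * k) / ((2 * k)! : ℝ)‖ := by
  refine ((Real.summable_pow_div_factorial |x|).comp_injective
    (mul_right_injective₀ two_ne_zero)).congr fun k => ?_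
  simp

theorem summable_norm_besselJ0_term (x : ℝ) :
    Summable fun k : ℕ => ‖(-1) ^ k * (x / 2) ^ (2 * k) / (k ! : ℝ) ^ 2‖ := by
  refine .of_nonneg_of_le (fun k => norm_nonneg _) (fun k => ?_)
    (Real.summable_pow_div_factorial ((x / 2) ^ 2))
  have hfac : (1 : ℝ) ≤ k ! := mod_cast k.factorial_pos
  rw [Real.norm_eq_abs, abs_div, abs_mul, abs_pow, abs_neg, abs_one, one_pow, one_mul, pow_mul,
    abs_pow, abs_sq, abs_pow, abs_of_nonneg (cast_nonneg _)]
  gcongr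
  exact le_self_pow₀ hfac two_ne_zero

theorem besselJ0_term_mul_cos_term (x : ℝ) {k n : ℕ} (hk : k ≤ n) :
    (-1) ^ k * (x / 2) ^ (2 * k) / (k ! : ℝ) ^ 2 *
        ((-1) ^ (n - k) * x ^ (2 * (n - k)) / ((2 * (n - k))! : ℝ)) =
      (-(x ^ 2)) ^ n * ((2 * n).choose (2 * k) * k.centralBinom * 4 ^ (n - k) : ℕ) /
        (4 ^ n * (2 * n)!) := by
  have hfac : (2 * n)! = (2 * n).choose (2 * k) * k.centralBinom * k ! * k ! * (2 * (n - k))! := by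
    rw [← choose_mul_factorial_mul_factorial (Nat.mul_le_mul_left 2 hk),
      ← centralBinom_mul_factorial_mul_factorial, Nat.mul_sub]
    ring
  have hpow {a : ℝ} : a ^ n = a ^ k * a ^ (n - k) := by rw [← pow_add, Nat.add_sub_cancel' hk]
  rw [hfac, hpow, hpow, pow_mul, pow_mul, div_pow, div_pow, neg_pow (x ^ 2), neg_pow (x ^ 2)]
  have hchoose : ((2 * n).choose (2 * k) : ℝ) ≠ 0 :=
    cast_ne_zero.mpr (choose_pos (Nat.mul_le_mul_left 2 hk)).ne'
  have hcentral : (k.centralBinom : ℝ) ≠ 0 := cast_ne_zero.mpr (centralBinom_ne_zero k)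
  push_cast
  field_simp
  ring

theorem cos_mul_besselJ0_hypergeom (x : ℝ) :
    Real.cos x * besselJ0 x =
      ∑' n : ℕ, (poch (1/4) n * poch (3/4) n) / (poch (1/2) n * poch (1/2) n)
        * (-(x ^ 2)) ^ n / (Nat.factorial n : ℝ) ^ 2 := by
  rw [Real.cos_eq_tsum, besselJ0, mul_comm, tsum_mul_tsum_eq_tsum_sum_range_of_summable_norm
    (summable_norm_besselJ0_term x) (summable_norm_cos_term x)]
  refine tsum_congr fun n => ?_
  rw [sum_congr rfl fun k hk => besselJ0_term_mul_cos_term x (mem_range_succ_iff.mp hk),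
    ← sum_div, ← mul_sum, ← cast_sum, sum_choose_mul_centralBinom_mul_four_pow, mul_div_assoc,
    cast_choose_four_mul_two_mul_div]
  ring
end
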